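/- arXiv:2505.10795 — 3 statements merged into one kernel-verified Lean document; each statement's English description precedes it below -/
import Mathlib

section
/- Let n ≥ 2 and γ ∈ [0, 1/√n). The Hilbert diameter of the cone K(γ) equals ln(1 − n + n/(1 − √n·γ)²); that is, sup{d(x,y) : x, y ∈ K(γ), x ≠ 0, y ≠ 0} = ln(1 − n + n/(1 − √n·γ)²). -/
/-- The Euclidean norm on `ℝⁿ` (coordinates model). -/
noncomputable def eunorm {n : ℕ} (x : Fin n → ℝ) : ℝ := Real.sqrt (∑ i, (x i) ^ 2)

/-- The Hilbert (projective) metric between two vectors with strictly positive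
coordinates: `d(x,y) = log((max_i x_i/y_i)/(min_i x_i/y_i))`. -/
noncomputable def hilbertDist {n : ℕ} (x y : Fin n → ℝ) : ℝ :=
  Real.log ((⨆ i, x i / y i) / (⨅ i, x i / y i))

/-- The cone `K(γ) = {x ∈ ℝⁿ : x_i ≥ (1/√n − γ)·|x| for every i}`. -/
noncomputable def Kcone (n : ℕ) (γ : ℝ) : Set (Fin n → ℝ) :=
  {x | ∀ i, (1 / Real.sqrt n - γ) * eunorm x ≤ x i}

/-!
Write `c = 1/√n − γ` and `M = √(1 − (n − 1)c²)`. If every coordinate of `x` is at least `c|x|`,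
the other `n − 1` coordinates use up at least `(n − 1)c²|x|²` of `|x|²`, so every coordinate lies
in `[c|x|, M|x|]`. Hence for `x, y ∈ K(γ)` the ratios `x_i/y_i` lie in
`[(c/M)|x|/|y|, (M/c)|x|/|y|]` and `d(x, y) ≤ log (M/c)²`. The unit vectors `(M, c, …, c)` and
`(c, M, c, …, c)` lie in `K(γ)` and attain this bound, and `(M/c)² = 1 − n + n/(1 − √n γ)²`.
-/

open Finset Set

section eunorm

variable {n : ℕ}

lemma eunorm_nonneg (x : Fin n → ℝ) : 0 ≤ eunorm x := Real.sqrt_nonneg _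

lemma eunorm_sq (x : Fin n → ℝ) : eunorm x ^ 2 = ∑ i, x i ^ 2 :=
  Real.sq_sqrt (by positivity)

lemma eunorm_pos {x : Fin n → ℝ} (hx : x ≠ 0) : 0 < eunorm x := by
  obtain ⟨i, hi⟩ := Function.ne_iff.mp hx
  exact Real.sqrt_pos.mpr <|
    sum_pos' (fun j _ => sq_nonneg _) ⟨i, mem_univ i, pow_two_pos_of_ne_zero hi⟩

lemma le_sqrt_mul_eunorm_of_forall_mul_eunorm_le {c : ℝ} (hc : 0 ≤ c) {x : Fin n → ℝ}
    (hx : ∀ i, c * eunorm x ≤ x i) (i : Fin n) :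
    x i ≤ Real.sqrt (1 - ((n : ℝ) - 1) * c ^ 2) * eunorm x := by
  have hothers : ((n : ℝ) - 1) * (c * eunorm x) ^ 2 ≤ ∑ j ∈ univ.erase i, x j ^ 2 := by
    have := card_nsmul_le_sum (univ.erase i) (fun j => x j ^ 2) ((c * eunorm x) ^ 2)
      fun j _ => pow_le_pow_left₀ (mul_nonneg hc (eunorm_nonneg x)) (hx j) 2
    rwa [card_erase_of_mem (mem_univ i), card_univ, Fintype.card_fin, nsmul_eq_mul,
      Nat.cast_sub i.pos, Nat.cast_one] at this
  have hsq : x i ^ 2 ≤ (1 - ((n : ℝ) - 1) * c ^ 2) * eunorm x ^ 2 := by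
    have := add_sum_erase univ (fun j => x j ^ 2) (mem_univ i)
    rw [← eunorm_sq] at this
    nlinarith
  calc x i ≤ Real.sqrt ((1 - ((n : ℝ) - 1) * c ^ 2) * eunorm x ^ 2) := Real.le_sqrt_of_sq_le hsq
    _ = Real.sqrt (1 - ((n : ℝ) - 1) * c ^ 2) * eunorm x := by
      rw [Real.sqrt_mul' _ (sq_nonneg _), Real.sqrt_sq (eunorm_nonneg x)]

lemma eunorm_update_const (i : Fin n) (a b : ℝ) :
    eunorm (Function.update (fun _ => a) i b) = Real.sqrt (b ^ 2 + ((n : ℝ) - 1) * a ^ 2) := by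
  rw [eunorm, ← add_sum_erase univ _ (mem_univ i), Function.update_self,
    sum_congr rfl fun j hj => by rw [Function.update_of_ne (ne_of_mem_erase hj)], sum_const,
    card_erase_of_mem (mem_univ i), card_univ, Fintype.card_fin, nsmul_eq_mul,
    Nat.cast_sub i.pos, Nat.cast_one]

end eunorm

section hilbertDist

variable {n : ℕ} {x y : Fin n → ℝ} {a b : ℝ}

lemma hilbertDist_le_log_sq_div [NeZero n] {u v : ℝ} (ha : 0 < a) (hu : 0 < u) (hv : 0 < v)
    (hx : ∀ i, x i ∈ Icc (a * u) (b * u)) (hy : ∀ i, y i ∈ Icc (a * v) (b * v)) :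
    hilbertDist x y ≤ Real.log ((b / a) ^ 2) := by
  have hxpos i : 0 < x i := (hx i).1.trans_lt' (by positivity)
  have hypos i : 0 < y i := (hy i).1.trans_lt' (by positivity)
  have hsup : (⨆ i, x i / y i) ≤ b * u / (a * v) :=
    ciSup_le fun i => div_le_div₀ (hxpos i |>.le.trans (hx i).2) (hx i).2 (by positivity) (hy i).1
  have hinf : a * u / (b * v) ≤ ⨅ i, x i / y i :=
    le_ciInf fun i => div_le_div₀ (hxpos i).le (hx i).1 (hypos i) (hy i).2
  have hb : 0 < b := ha.trans_le <| le_of_mul_le_mul_right ((hy 0).1.trans (hy 0).2) hv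
  have hsup_pos : 0 < ⨆ i, x i / y i :=
    (div_pos (hxpos 0) (hypos 0)).trans_le <|
      le_ciSup (f := fun i => x i / y i) (Finite.bddAbove (finite_range _)) 0
  have hinf_pos : 0 < ⨅ i, x i / y i := hinf.trans_lt' (by positivity)
  refine Real.log_le_log (div_pos hsup_pos hinf_pos) ?_
  calc (⨆ i, x i / y i) / (⨅ i, x i / y i) ≤ (b * u / (a * v)) / (a * u / (b * v)) :=
        div_le_div₀ (by positivity) hsup (by positivity) hinf
    _ = (b / a) ^ 2 := by field_simp

lemma hilbertDist_eq_log_sq_div (ha : 0 < a) (hx : ∀ k, x k ∈ Icc a b) (hy : ∀ k, y k ∈ Icc a b)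
    {i j : Fin n} (hxi : x i = b) (hyi : y i = a) (hxj : x j = a) (hyj : y j = b) :
    hilbertDist x y = Real.log ((b / a) ^ 2) := by
  have : Nonempty (Fin n) := ⟨i⟩
  have hb : 0 < b := hxi ▸ ha.trans_le (hx i).1
  have hsup : (⨆ k, x k / y k) = b / a :=
    le_antisymm (ciSup_le fun k => div_le_div₀ hb.le (hx k).2 ha (hy k).1)
      (hxi ▸ hyi ▸ le_ciSup (f := fun k => x k / y k) (Finite.bddAbove (finite_range _)) i)
  have hinf : (⨅ k, x k / y k) = a / b :=
    le_antisymm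
      (hxj ▸ hyj ▸ ciInf_le (f := fun k => x k / y k) (Finite.bddBelow (finite_range _)) j)
      (le_ciInf fun k =>
        div_le_div₀ ((hx k).1.trans' ha.le) (hx k).1 (ha.trans_le (hy k).1) (hy k).2)
  rw [hilbertDist, hsup, hinf]
  congr 1
  field_simp

end hilbertDist

section coneBounds

variable {n : ℕ} {c : ℝ}

lemma hilbertDist_le_of_forall_mul_eunorm_le [NeZero n] {x y : Fin n → ℝ} (hc : 0 < c)
    (hx : ∀ k, c * eunorm x ≤ x k) (hy : ∀ k, c * eunorm y ≤ y k) (hx0 : x ≠ 0) (hy0 : y ≠ 0) :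
    hilbertDist x y ≤ Real.log ((Real.sqrt (1 - ((n : ℝ) - 1) * c ^ 2) / c) ^ 2) :=
  have hbounds {z : Fin n → ℝ} (hz : ∀ k, c * eunorm z ≤ z k) k :
      z k ∈ Icc (c * eunorm z) (Real.sqrt (1 - ((n : ℝ) - 1) * c ^ 2) * eunorm z) :=
    ⟨hz k, le_sqrt_mul_eunorm_of_forall_mul_eunorm_le hc.le hz k⟩
  hilbertDist_le_log_sq_div hc (eunorm_pos hx0) (eunorm_pos hy0) (hbounds hx) (hbounds hy)

lemma exists_hilbertDist_eq_of_forall_mul_eunorm_le (hn : 2 ≤ n) (hc : 0 < c)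
    (hnc : (n : ℝ) * c ^ 2 ≤ 1) :
    ∃ x y : Fin n → ℝ, (∀ k, c * eunorm x ≤ x k) ∧ (∀ k, c * eunorm y ≤ y k) ∧ x ≠ 0 ∧ y ≠ 0 ∧
      hilbertDist x y = Real.log ((Real.sqrt (1 - ((n : ℝ) - 1) * c ^ 2) / c) ^ 2) := by
  set M := Real.sqrt (1 - ((n : ℝ) - 1) * c ^ 2)
  have hM : M ^ 2 = 1 - ((n : ℝ) - 1) * c ^ 2 := Real.sq_sqrt (by nlinarith)
  have hcM : c ≤ M := Real.le_sqrt_of_sq_le (by nlinarith)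
  let e (j : Fin n) : Fin n → ℝ := Function.update (fun _ => c) j M
  have he_norm j : eunorm (e j) = 1 := by
    rw [eunorm_update_const, hM, sub_add_cancel, Real.sqrt_one]
  have he_mem j k : e j k ∈ Icc c M := by
    rcases eq_or_ne k j with rfl | h
    · simp [e, hcM]
    · simp [e, h, hcM]
  have he_lower j k : c * eunorm (e j) ≤ e j k := by rw [he_norm, mul_one]; exact (he_mem j k).1
  have he_ne j : e j ≠ 0 := fun h => (hc.trans_le hcM).ne' <| by simpa [e] using congrFun h j
  obtain ⟨i, j, hij⟩ : ∃ i j : Fin n, i ≠ j := ⟨⟨0, by omega⟩, ⟨1, by omega⟩, by simp⟩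
  exact ⟨e i, e j, he_lower i, he_lower j, he_ne i, he_ne j, hilbertDist_eq_log_sq_div
    (i := i) (j := j) hc (he_mem i) (he_mem j) (by simp [e]) (by simp [e, hij])
    (by simp [e, hij.symm]) (by simp [e])⟩

end coneBounds

/-- the Hilbert diameter of `K(γ)` equals `log(1 − n + n/(1 − √n·γ)²)`. -/
theorem stmt4 {n : ℕ} (hn : 2 ≤ n) (γ : ℝ) (hγ0 : 0 ≤ γ) (hγ : γ < 1 / Real.sqrt n) :
    sSup {d : ℝ | ∃ x ∈ Kcone n γ, ∃ y ∈ Kcone n γ, x ≠ 0 ∧ y ≠ 0 ∧ d = hilbertDist x y} =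
      Real.log (1 - (n : ℝ) + (n : ℝ) / (1 - Real.sqrt n * γ) ^ 2) := by
  have : NeZero n := ⟨by omega⟩
  set c := 1 / Real.sqrt n - γ
  have hc : 0 < c := sub_pos.mpr hγ
  have hsc : Real.sqrt n * c = 1 - Real.sqrt n * γ := by
    rw [mul_sub, mul_one_div_cancel (by positivity)]
  have hnc : (n : ℝ) * c ^ 2 ≤ 1 := by
    have : (Real.sqrt n * c) ^ 2 ≤ 1 := by
      have : 0 < Real.sqrt n * c := by positivity
      nlinarith [mul_nonneg (Real.sqrt_nonneg n) hγ0]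
    rwa [mul_pow, Real.sq_sqrt n.cast_nonneg] at this
  have htarget : 1 - (n : ℝ) + n / (1 - Real.sqrt n * γ) ^ 2 =
      (Real.sqrt (1 - ((n : ℝ) - 1) * c ^ 2) / c) ^ 2 := by
    rw [← hsc, mul_pow, Real.sq_sqrt n.cast_nonneg, div_pow, Real.sq_sqrt (by nlinarith)]
    field_simp
    ring
  obtain ⟨x, y, hx, hy, hx0, hy0, hxy⟩ := exists_hilbertDist_eq_of_forall_mul_eunorm_le hn hc hnc
  rw [htarget]
  refine IsGreatest.csSup_eq ⟨⟨x, hx, y, hy, hx0, hy0, hxy.symm⟩, ?_⟩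
  rintro d ⟨x, hx, y, hy, hx0, hy0, rfl⟩
  exact hilbertDist_le_of_forall_mul_eunorm_le hc hx hy hx0 hy0
end

section
/- Let n ≥ 2, let K ⊆ ℝⁿ be a closed cone with K ⊆ Int(ℝ₊ⁿ) ∪ {0}, and let 0 < r ≤ R and k, λ > 0. Then there exists K′ > 0 with the following property: for every function x : [0,∞) → K satisfying r ≤ |x(t)| ≤ R for all t ≥ 0 and |x_i(t) − x_j(t)| ≤ k·e^{−λt}·|x_i(0) − x_j(0)| for all indices i, j and all t ≥ 0, one has d(x(t), 𝟙) ≤ K′·e^{−λt}·d(x(0), 𝟙) for all t ≥ 0, where d is the Hilbert metric and 𝟙 the all-ones vector. -/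
/-- For a finite nonempty index type, the `iSup` of a real function is attained. -/
lemma exists_eq_ciSup {n : ℕ} [Nonempty (Fin n)] (f : Fin n → ℝ) :
    ∃ i, (⨆ j, f j) = f i ∧ ∀ j, f j ≤ f i := by
  obtain ⟨i, hi⟩ := Finite.exists_max f
  exact ⟨i, le_antisymm (ciSup_le hi)
    (le_ciSup (Set.Finite.bddAbove (Set.finite_range f)) i), hi⟩

/-- For a finite nonempty index type, the `iInf` of a real function is attained. -/
lemma exists_eq_ciInf {n : ℕ} [Nonempty (Fin n)] (f : Fin n → ℝ) :
    ∃ i, (⨅ j, f j) = f i ∧ ∀ j, f i ≤ f j := by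
  obtain ⟨i, hi⟩ := Finite.exists_min f
  exact ⟨i, le_antisymm (ciInf_le (Set.Finite.bddBelow (Set.finite_range f)) i)
    (le_ciInf hi), hi⟩

lemma abs_le_eunorm {n : ℕ} (x : Fin n → ℝ) (i : Fin n) : |x i| ≤ eunorm x := by
  rw [eunorm, ← Real.sqrt_sq_eq_abs]
  exact Real.sqrt_le_sqrt (Finset.single_le_sum
    (fun j _ => sq_nonneg (x j)) (Finset.mem_univ i))

/-- exponential consensus of a trajectory staying in a closed cone
`K ⊆ Int(ℝ₊ⁿ) ∪ {0}` with norm bounded in `[r, R]` implies exponential contraction of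
the Hilbert distance from the trajectory to the all-ones vector. -/
theorem stmt13 {n : ℕ} (hn : 2 ≤ n) (K : Set (Fin n → ℝ)) (hcl : IsClosed K)
    (hadd : ∀ x ∈ K, ∀ y ∈ K, x + y ∈ K)
    (hsmul : ∀ c : ℝ, 0 ≤ c → ∀ x ∈ K, c • x ∈ K)
    (hprop : ∀ x ∈ K, -x ∈ K → x = 0)
    (hpos : ∀ x ∈ K, x ≠ 0 → ∀ i, 0 < x i)
    (r R k lam : ℝ) (hr : 0 < r) (hrR : r ≤ R) (hk : 0 < k) (hlam : 0 < lam) :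
    ∃ K' : ℝ, 0 < K' ∧ ∀ x : ℝ → Fin n → ℝ,
      (∀ t, 0 ≤ t → x t ∈ K) →
      (∀ t, 0 ≤ t → r ≤ eunorm (x t) ∧ eunorm (x t) ≤ R) →
      (∀ t, 0 ≤ t → ∀ i j, |x t i - x t j| ≤ k * Real.exp (-lam * t) * |x 0 i - x 0 j|) →
      ∀ t, 0 ≤ t →
        hilbertDist (x t) (fun _ => 1) ≤
          K' * Real.exp (-lam * t) * hilbertDist (x 0) (fun _ => 1) := by
  haveI : Nonempty (Fin n) := ⟨⟨0, by omega⟩⟩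
  -- The compact set containing the trajectory
  set S : Set (Fin n → ℝ) := {y | y ∈ K ∧ r ≤ eunorm y ∧ eunorm y ≤ R} with hSdef
  have hSne0 : ∀ y ∈ S, y ≠ 0 := by
    rintro y ⟨_, h1, _⟩ rfl
    have : eunorm (0 : Fin n → ℝ) = 0 := by simp [eunorm]
    linarith [this ▸ h1]
  have hSpos : ∀ y ∈ S, ∀ i, 0 < y i := fun y hy i => hpos y hy.1 (hSne0 y hy) i
  rcases Set.eq_empty_or_nonempty S with hS | hSne
  · -- S empty: vacuous
    refine ⟨1, one_pos, fun x hxK hxnorm _ t ht => ?_⟩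
    exact absurd (show x 0 ∈ S from ⟨hxK 0 le_rfl, (hxnorm 0 le_rfl).1, (hxnorm 0 le_rfl).2⟩)
      (hS ▸ Set.notMem_empty _)
  · -- S compact
    have hcont : Continuous (eunorm (n := n)) := by
      apply Real.continuous_sqrt.comp
      exact continuous_finset_sum _ (fun i _ => (continuous_apply i).pow 2)
    have hScl : IsClosed S := by
      have : S = K ∩ (eunorm ⁻¹' Set.Icc r R) := by
        rfl
      rw [this]
      exact hcl.inter ((isClosed_Icc).preimage hcont)
    have hSbdd : Bornology.IsBounded S := by
      rw [isBounded_iff_forall_norm_le]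
      refine ⟨R, fun y hy => ?_⟩
      rw [pi_norm_le_iff_of_nonneg (le_trans hr.le (le_trans hy.2.1 hy.2.2))]
      exact fun i => le_trans (abs_le_eunorm y i) hy.2.2
    have hScpt : IsCompact S := Metric.isCompact_of_isClosed_isBounded hScl hSbdd
    -- uniform coordinate bounds c, C
    have hmin : ∀ i : Fin n, ∃ z ∈ S, ∀ y ∈ S, z i ≤ y i := by
      intro i
      obtain ⟨z, hz, hzmin⟩ := hScpt.exists_isMinOn hSne (continuous_apply i).continuousOn
      exact ⟨z, hz, fun y hy => hzmin hy⟩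
    have hmax : ∀ i : Fin n, ∃ z ∈ S, ∀ y ∈ S, y i ≤ z i := by
      intro i
      obtain ⟨z, hz, hzmax⟩ := hScpt.exists_isMaxOn hSne (continuous_apply i).continuousOn
      exact ⟨z, hz, fun y hy => hzmax hy⟩
    choose zmin hzminS hzmin using hmin
    choose zmax hzmaxS hzmax using hmax
    set c : ℝ := Finset.univ.inf' Finset.univ_nonempty (fun i => zmin i i) with hcdef
    set C : ℝ := Finset.univ.sup' Finset.univ_nonempty (fun i => zmax i i) with hCdef
    have hc_pos : 0 < c := by
      obtain ⟨i, _, hi⟩ := Finset.exists_mem_eq_inf' Finset.univ_nonempty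
        (fun i => zmin i i)
      rw [hcdef, hi]
      exact hSpos _ (hzminS i) i
    have hc_le : ∀ y ∈ S, ∀ i, c ≤ y i := fun y hy i =>
      le_trans (Finset.inf'_le _ (Finset.mem_univ i)) (hzmin i y hy)
    have hC_ge : ∀ y ∈ S, ∀ i, y i ≤ C := fun y hy i =>
      le_trans (hzmax i y hy) (Finset.le_sup' (fun j => zmax j j) (Finset.mem_univ i))
    have hcC : c ≤ C := by
      obtain ⟨y, hy⟩ := hSne
      exact le_trans (hc_le y hy (Classical.arbitrary _)) (hC_ge y hy (Classical.arbitrary _))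
    have hC_pos : 0 < C := lt_of_lt_of_le hc_pos hcC
    refine ⟨k * C / c, by positivity, fun x hxK hxnorm hxcons t ht => ?_⟩
    have hxS : ∀ s, 0 ≤ s → x s ∈ S := fun s hs =>
      ⟨hxK s hs, (hxnorm s hs).1, (hxnorm s hs).2⟩
    -- extrema at time t and time 0
    obtain ⟨iM, hiM, hiMle⟩ := exists_eq_ciSup (x t)
    obtain ⟨im, him, himle⟩ := exists_eq_ciInf (x t)
    obtain ⟨jM, hjM, hjMle⟩ := exists_eq_ciSup (x 0)
    obtain ⟨jm, hjm, hjmle⟩ := exists_eq_ciInf (x 0)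
    have hposT : ∀ i, 0 < x t i := hSpos _ (hxS t ht)
    have hpos0 : ∀ i, 0 < x 0 i := hSpos _ (hxS 0 le_rfl)
    have hcT : ∀ i, c ≤ x t i := hc_le _ (hxS t ht)
    have hC0 : ∀ i, x 0 i ≤ C := hC_ge _ (hxS 0 le_rfl)
    have hd : hilbertDist (x t) (fun _ => 1) = Real.log (x t iM / x t im) := by
      rw [hilbertDist]
      simp only [div_one, hiM, him]
    have hd0 : hilbertDist (x 0) (fun _ => 1) = Real.log (x 0 jM / x 0 jm) := by
      rw [hilbertDist]
      simp only [div_one, hjM, hjm]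
    have hmm : x t im ≤ x t iM := hiMle im
    have hmm0 : x 0 jm ≤ x 0 jM := hjMle jm
    -- upper bound on log at time t
    have h1 : Real.log (x t iM / x t im) ≤ (x t iM - x t im) / c := by
      have := Real.log_le_sub_one_of_pos (div_pos (hposT iM) (hposT im))
      have h2 : x t iM / x t im - 1 = (x t iM - x t im) / x t im := by
        rw [eq_div_iff (hposT im).ne', sub_mul, div_mul_cancel₀ _ (hposT im).ne', one_mul]
      refine le_trans (this.trans_eq h2) ?_
      exact div_le_div_of_nonneg_left (by linarith) hc_pos (hcT im)
    -- consensus bound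
    have h3 : x t iM - x t im ≤ k * Real.exp (-lam * t) * (x 0 jM - x 0 jm) := by
      have := hxcons t ht iM im
      have habs : |x 0 iM - x 0 im| ≤ x 0 jM - x 0 jm := by
        rw [abs_le]
        constructor <;> nlinarith [hjMle iM, hjmle iM, hjMle im, hjmle im]
      calc x t iM - x t im ≤ |x t iM - x t im| := le_abs_self _
        _ ≤ k * Real.exp (-lam * t) * |x 0 iM - x 0 im| := this
        _ ≤ k * Real.exp (-lam * t) * (x 0 jM - x 0 jm) := by
            apply mul_le_mul_of_nonneg_left habs
            positivity
    -- lower bound on log at time 0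
    have h4 : (x 0 jM - x 0 jm) / C ≤ Real.log (x 0 jM / x 0 jm) := by
      have hlog : Real.log (x 0 jm / x 0 jM) ≤ x 0 jm / x 0 jM - 1 :=
        Real.log_le_sub_one_of_pos (div_pos (hpos0 jm) (hpos0 jM))
      have heq : Real.log (x 0 jM / x 0 jm) = -Real.log (x 0 jm / x 0 jM) := by
        rw [← Real.log_inv, inv_div]
      rw [heq]
      have h5 : (x 0 jM - x 0 jm) / x 0 jM = 1 - x 0 jm / x 0 jM := by
        rw [sub_div, div_self (hpos0 jM).ne']
      have h6 : (x 0 jM - x 0 jm) / C ≤ (x 0 jM - x 0 jm) / x 0 jM :=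
        div_le_div_of_nonneg_left (by linarith) (hpos0 jM) (hC0 jM)
      linarith [h5 ▸ h6]
    -- combine
    rw [hd, hd0]
    have hexp : (0:ℝ) < Real.exp (-lam * t) := Real.exp_pos _
    calc Real.log (x t iM / x t im) ≤ (x t iM - x t im) / c := h1
      _ ≤ k * Real.exp (-lam * t) * (x 0 jM - x 0 jm) / c := by
          exact (div_le_div_iff_of_pos_right hc_pos).mpr h3
      _ = (k * C / c) * Real.exp (-lam * t) * ((x 0 jM - x 0 jm) / C) := by
          field_simp
      _ ≤ (k * C / c) * Real.exp (-lam * t) * Real.log (x 0 jM / x 0 jm) := by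
          apply mul_le_mul_of_nonneg_left h4
          positivity
end

section
/- (Nonlinear consensus under accumulated-graph connectivity, trajectory form of the paper's main theorem.) Let n ≥ 1 and let A : [0,∞) × ℝⁿ → ℝ^{n×n} be continuous and uniformly bounded, such that for every (t,y), A(t,y)_{ij} ≥ 0 for all i ≠ j and Σ_j A(t,y)_{ij} = 0 for every row i. Let x : [0,∞) → ℝⁿ be differentiable with x′(t) = A(t, x(t))·x(t) for all t ≥ 0. Suppose there exist a strictly increasing sequence (t_k)_{k≥1} with t_k → ∞ and sup_k (t_{k+1} − t_k) < ∞, an index ℓ and δ > 0 such that ∫_{t_k}^{t_{k+1}} A(s, x(s))_{iℓ} ds ≥ δ for every i ≠ ℓ and every k ≥ 1. Then there exist constants k₀, λ > 0 such that max_{i,j} |x_i(t) − x_j(t)| ≤ k₀·e^{−λt}·max_{i,j} |x_i(0) − x_j(0)| for all t ≥ 0. -/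
/-!
Along the trajectory, `B t = A t (x t)` is a bounded Metzler matrix with zero row sums, and `x`
solves the *linear* system `x' = B t x`. Linear Metzler systems preserve nonnegativity (Grönwall
applied to `∑ i, ((-y i)⁺)²`), and constants solve the system, so `max x` cannot increase and
`min x` cannot decrease. For a nonnegative solution `y`, `exp (C t) * y i t` is nondecreasing and
grows at least at rate `exp (C t) * B t i l * y l t`; integrated over one window `[t_k, t_{k+1}]`
this yields `y i (t_{k+1}) ≥ η * y l (t_k)` for every `i`, with `η = min δ 1 * exp (-C S)`.
Applied to `max x (t_k) - x` and to `x - min x (t_k)`, this shrinks `max x - min x` by the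
factor `1 - η ≤ exp (-η)` over every window, and windows of length at most `S` turn this into
exponential decay at rate `η / S`.
-/

open Real Set Finset Matrix

lemma abs_posPart_sq_sub_le (u v : ℝ) :
    |v⁺ ^ 2 - u⁺ ^ 2 - (v - u) * (2 * u⁺)| ≤ (v - u) ^ 2 := by
  rcases le_total 0 u with hu | hu <;> rcases le_total 0 v with hv | hv <;>
    simp only [posPart_eq_self.mpr, posPart_eq_zero.mpr, hu, hv] <;>
    rw [abs_le] <;> constructor <;> nlinarith

lemma hasDerivAt_posPart_sq (u : ℝ) : HasDerivAt (fun v : ℝ => v⁺ ^ 2) (2 * u⁺) u := by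
  rw [hasDerivAt_iff_isLittleO_nhds_zero]
  refine (Asymptotics.IsBigO.of_bound 1 (Filter.Eventually.of_forall fun h => ?_)).trans_isLittleO
    (Asymptotics.isLittleO_pow_id one_lt_two)
  simpa [abs_of_nonneg (sq_nonneg h)] using abs_posPart_sq_sub_le u (u + h)

def Matrix.IsMetzler {ι : Type*} (M : Matrix ι ι ℝ) : Prop := ∀ i j, i ≠ j → 0 ≤ M i j

namespace Matrix.IsMetzler

variable {ι : Type*} [Fintype ι] {M : Matrix ι ι ℝ} {C : ℝ}

lemma posPart_mul_mulVec_le (hM : M.IsMetzler) (hMC : ∀ i j, M i j ≤ C) (z : ι → ℝ) (i : ι) :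
    (z i)⁺ * (M *ᵥ z) i ≤ C * (z i)⁺ * ∑ j, (z j)⁺ := by
  rw [mulVec, dotProduct, mul_sum, mul_sum]
  refine sum_le_sum fun j _ => ?_
  rcases eq_or_ne i j with rfl | hij
  · have h : (z i)⁺ * z i = (z i)⁺ * (z i)⁺ := by
      rcases le_total 0 (z i) with h | h
      · rw [posPart_eq_self.mpr h]
      · rw [posPart_eq_zero.mpr h, zero_mul, zero_mul]
    calc (z i)⁺ * (M i i * z i) = M i i * ((z i)⁺ * (z i)⁺) := by rw [← h]; ring
      _ ≤ C * ((z i)⁺ * (z i)⁺) := by gcongr; exact hMC i i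
      _ = _ := by ring
  · calc (z i)⁺ * (M i j * z j) ≤ (z i)⁺ * (M i j * (z j)⁺) := by
          gcongr
          · exact hM i j hij
          · exact le_posPart _
      _ ≤ (z i)⁺ * (C * (z j)⁺) := by gcongr; exact hMC i j
      _ = _ := by ring

lemma sum_posPart_mul_mulVec_le (hM : M.IsMetzler) (hMC : ∀ i j, M i j ≤ C) (z : ι → ℝ) :
    ∑ i, (z i)⁺ * (M *ᵥ z) i ≤ |C| * Fintype.card ι * ∑ i, (z i)⁺ ^ 2 :=
  calc ∑ i, (z i)⁺ * (M *ᵥ z) i ≤ ∑ i, C * (z i)⁺ * ∑ j, (z j)⁺ :=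
        sum_le_sum fun i _ => hM.posPart_mul_mulVec_le hMC z i
    _ = C * (∑ i, (z i)⁺) ^ 2 := by rw [← sum_mul, ← mul_sum, sq, mul_assoc]
    _ ≤ |C| * (∑ i, (z i)⁺) ^ 2 := by gcongr; exact le_abs_self C
    _ ≤ |C| * (Fintype.card ι * ∑ i, (z i)⁺ ^ 2) := by gcongr; exact sq_sum_le_card_mul_sum_sq
    _ = _ := by ring

end Matrix.IsMetzler

lemma Matrix.sum_erase_le_add_mulVec {ι : Type*} [Fintype ι] [DecidableEq ι] {M : Matrix ι ι ℝ}
    {C : ℝ} {v : ι → ℝ} (i : ι) (hC : -C ≤ M i i) (hv : 0 ≤ v i) :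
    ∑ j ∈ univ.erase i, M i j * v j ≤ C * v i + (M *ᵥ v) i := by
  have : (M *ᵥ v) i = M i i * v i + ∑ j ∈ univ.erase i, M i j * v j :=
    (add_sum_erase _ (fun j => M i j * v j) (mem_univ i)).symm
  nlinarith [mul_nonneg (neg_le_iff_add_nonneg.mp hC) hv]

theorem nonneg_of_hasDerivAt_mulVec {ι : Type*} [Fintype ι] {B : ℝ → Matrix ι ι ℝ}
    {y : ℝ → ι → ℝ} {a C : ℝ} (hB : ∀ t, a ≤ t → (B t).IsMetzler)
    (hBC : ∀ t, a ≤ t → ∀ i j, B t i j ≤ C) (hy : ∀ t, a ≤ t → HasDerivAt y (B t *ᵥ y t) t)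
    (hya : 0 ≤ y a) {t : ℝ} (ht : a ≤ t) : 0 ≤ y t := by
  set φ : ℝ → ℝ := fun s => ∑ i, (-y s i)⁺ ^ 2
  set φ' : ℝ → ℝ := fun s => ∑ i, 2 * (-y s i)⁺ * -(B s *ᵥ y s) i
  have hφ : ∀ s, a ≤ s → HasDerivAt φ (φ' s) s := fun s hs =>
    HasDerivAt.fun_sum fun i _ =>
      (hasDerivAt_posPart_sq _).comp s (hasDerivAt_pi.mp (hy s hs) i).neg
  have hφ' : ∀ s, a ≤ s → φ' s ≤ 2 * |C| * Fintype.card ι * φ s + 0 := fun s hs =>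
    calc φ' s = 2 * ∑ i, (-y s i)⁺ * (B s *ᵥ -y s) i := by
          simp only [φ', mul_sum, mulVec_neg, Pi.neg_apply, mul_assoc]
      _ ≤ 2 * (|C| * Fintype.card ι * φ s) := by
          gcongr; exact (hB s hs).sum_posPart_mul_mulVec_le (hBC s hs) _
      _ = _ := by ring
  have hφa : φ a ≤ 0 := (sum_eq_zero fun i _ => by
    rw [posPart_eq_zero.mpr (neg_nonpos.mpr (hya i)), zero_pow two_ne_zero]).le
  have hφt : φ t ≤ 0 := by
    have := le_gronwallBound_of_liminf_deriv_right_le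
      (fun s hs => (hφ s hs.1).continuousAt.continuousWithinAt)
      (fun s hs _ hr => (hφ s hs.1).hasDerivWithinAt.liminf_right_slope_le hr) hφa
      (fun s hs => hφ' s hs.1) t ⟨ht, le_rfl⟩
    rwa [gronwallBound_ε0_δ0] at this
  intro i
  have hi : (-y t i)⁺ ^ 2 = 0 :=
    (sum_eq_zero_iff_of_nonneg fun j _ => sq_nonneg _).mp
      (hφt.antisymm (sum_nonneg fun j _ => sq_nonneg _)) i (mem_univ i)
  simpa using (pow_eq_zero_iff two_ne_zero).mp hi

lemma hasDerivAt_exp_mul_apply {ι : Type*} {y : ℝ → ι → ℝ} {y' : ι → ℝ} {t : ℝ}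
    (hy : HasDerivAt y y' t) (C : ℝ) (i : ι) :
    HasDerivAt (fun s => exp (C * s) * y s i) (exp (C * t) * (C * y t i + y' i)) t := by
  refine (((hasDerivAt_id' t).const_mul C).exp.fun_mul (hasDerivAt_pi.mp hy i)).congr_deriv ?_
  ring

lemma exp_neg_mul_sub_mul_le {a b P Q : ℝ} (C : ℝ) (h : exp (C * a) * P ≤ exp (C * b) * Q) :
    exp (-(C * (b - a))) * P ≤ Q :=
  calc exp (-(C * (b - a))) * P = exp (-(C * b)) * (exp (C * a) * P) := by
        rw [show -(C * (b - a)) = -(C * b) + C * a by ring, exp_add]; ring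
    _ ≤ exp (-(C * b)) * (exp (C * b) * Q) := by gcongr
    _ = Q := by rw [← mul_assoc, ← exp_add, neg_add_cancel, exp_zero, one_mul]

section ExpWeighted

variable {ι : Type*} [Fintype ι] [DecidableEq ι] {B : ℝ → Matrix ι ι ℝ} {y : ℝ → ι → ℝ}
  {a b C : ℝ}

lemma monotoneOn_exp_mul_apply (hB : ∀ t, a ≤ t → (B t).IsMetzler)
    (hBC : ∀ t, a ≤ t → ∀ i, -C ≤ B t i i) (hy : ∀ t, a ≤ t → HasDerivAt y (B t *ᵥ y t) t)
    (hy0 : ∀ t, a ≤ t → 0 ≤ y t) (i : ι) :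
    MonotoneOn (fun s => exp (C * s) * y s i) (Ici a) := by
  refine monotoneOn_of_hasDerivWithinAt_nonneg (convex_Ici a)
    (fun s hs => (hasDerivAt_exp_mul_apply (hy s hs) C i).continuousAt.continuousWithinAt)
    (fun s hs => (hasDerivAt_exp_mul_apply (hy s (interior_subset hs)) C i).hasDerivWithinAt)
    fun s hs => ?_
  have hs : a ≤ s := interior_subset hs
  refine mul_nonneg (exp_pos _).le ((sum_nonneg fun j hj => ?_).trans
    (sum_erase_le_add_mulVec i (hBC s hs i) (hy0 s hs i)))
  exact mul_nonneg (hB s hs i j (ne_of_mem_erase hj).symm) (hy0 s hs j)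

lemma apply_mul_exp_le (hB : ∀ t, a ≤ t → (B t).IsMetzler)
    (hBC : ∀ t, a ≤ t → ∀ i, -C ≤ B t i i) (hy : ∀ t, a ≤ t → HasDerivAt y (B t *ᵥ y t) t)
    (hy0 : ∀ t, a ≤ t → 0 ≤ y t) (i : ι) {t : ℝ} (ht : a ≤ t) :
    exp (-(C * (t - a))) * y a i ≤ y t i :=
  exp_neg_mul_sub_mul_le C <|
    monotoneOn_exp_mul_apply hB hBC hy hy0 i self_mem_Ici ht ht

lemma apply_mul_exp_mul_integral_le (hB : ∀ t, a ≤ t → (B t).IsMetzler)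
    (hBC : ∀ t, a ≤ t → ∀ i, -C ≤ B t i i) (hy : ∀ t, a ≤ t → HasDerivAt y (B t *ᵥ y t) t)
    (hy0 : ∀ t, a ≤ t → 0 ≤ y t) (hab : a ≤ b) {i l : ι} (hil : i ≠ l)
    (hint : IntervalIntegrable (fun s => B s i l) MeasureTheory.volume a b) :
    exp (-(C * (b - a))) * (y a l * ∫ s in a..b, B s i l) ≤ y b i := by
  set g : ℝ → ℝ := fun s => exp (C * s) * y s i
  have hg : ∀ s, a ≤ s → HasDerivAt g (exp (C * s) * (C * y s i + (B s *ᵥ y s) i)) s :=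
    fun s hs => hasDerivAt_exp_mul_apply (hy s hs) C i
  have hφg : ∀ s ∈ Ioo a b,
      exp (C * a) * y a l * B s i l ≤ exp (C * s) * (C * y s i + (B s *ᵥ y s) i) := by
    intro s ⟨hs, _⟩
    have hBil : 0 ≤ B s i l := hB s hs.le i l hil
    calc exp (C * a) * y a l * B s i l ≤ exp (C * s) * y s l * B s i l :=
          mul_le_mul_of_nonneg_right
            (monotoneOn_exp_mul_apply hB hBC hy hy0 l self_mem_Ici hs.le hs.le) hBil
      _ = exp (C * s) * (B s i l * y s l) := by ring
      _ ≤ exp (C * s) * ∑ j ∈ univ.erase i, B s i j * y s j := by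
          gcongr
          refine single_le_sum (f := fun j => B s i j * y s j) (fun j hj => ?_)
            (mem_erase.mpr ⟨hil.symm, mem_univ l⟩)
          exact mul_nonneg (hB s hs.le i j (ne_of_mem_erase hj).symm) (hy0 s hs.le j)
      _ ≤ _ := by gcongr; exact sum_erase_le_add_mulVec i (hBC s hs.le i) (hy0 s hs.le i)
  have key := intervalIntegral.integral_le_sub_of_hasDeriv_right_of_le hab
    (fun s hs => (hg s hs.1).continuousAt.continuousWithinAt)
    (fun s hs => (hg s hs.1.le).hasDerivWithinAt)
    ((intervalIntegrable_iff_integrableOn_Icc_of_le hab).mp (hint.const_mul _)) hφg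
  rw [intervalIntegral.integral_const_mul] at key
  refine exp_neg_mul_sub_mul_le C ?_
  have : 0 ≤ g a := mul_nonneg (exp_pos _).le (hy0 a le_rfl i)
  calc exp (C * a) * (y a l * ∫ s in a..b, B s i l)
      = exp (C * a) * y a l * ∫ s in a..b, B s i l := by ring
    _ ≤ g b := by linarith

theorem mul_apply_le_of_window {S δ : ℝ} (hB : ∀ t, a ≤ t → (B t).IsMetzler)
    (hBC : ∀ t, a ≤ t → ∀ i j, |B t i j| ≤ C) (hy : ∀ t, a ≤ t → HasDerivAt y (B t *ᵥ y t) t)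
    (hya : 0 ≤ y a) (hab : a ≤ b) (hbS : b - a ≤ S) (hδ : 0 ≤ δ) (l : ι)
    (hint : ∀ i, i ≠ l → IntervalIntegrable (fun s => B s i l) MeasureTheory.volume a b)
    (hconn : ∀ i, i ≠ l → δ ≤ ∫ s in a..b, B s i l) (i : ι) :
    min δ 1 * exp (-(C * S)) * y a l ≤ y b i := by
  have hy0 : ∀ t, a ≤ t → 0 ≤ y t := fun t ht =>
    nonneg_of_hasDerivAt_mulVec hB (fun s hs i j => (abs_le.mp (hBC s hs i j)).2) hy hya ht
  have hBii : ∀ t, a ≤ t → ∀ i, -C ≤ B t i i := fun t ht i => (abs_le.mp (hBC t ht i i)).1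
  have hC : 0 ≤ C := (abs_nonneg _).trans (hBC a le_rfl l l)
  have hexp : exp (-(C * S)) ≤ exp (-(C * (b - a))) := by gcongr
  have hyal : 0 ≤ y a l := hya l
  rcases eq_or_ne i l with rfl | hil
  · calc min δ 1 * exp (-(C * S)) * y a i ≤ 1 * exp (-(C * (b - a))) * y a i := by
          gcongr; exact min_le_right δ 1
      _ ≤ y b i := by rw [one_mul]; exact apply_mul_exp_le hB hBii hy hy0 i hab
  · calc min δ 1 * exp (-(C * S)) * y a l ≤ δ * exp (-(C * (b - a))) * y a l := by
          gcongr; exact min_le_left δ 1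
      _ = exp (-(C * (b - a))) * (y a l * δ) := by ring
      _ ≤ exp (-(C * (b - a))) * (y a l * ∫ s in a..b, B s i l) := by gcongr; exact hconn i hil
      _ ≤ y b i := apply_mul_exp_mul_integral_le hB hBii hy hy0 hab hil (hint i hil)

end ExpWeighted

noncomputable def spread {ι : Type*} [Fintype ι] (v : ι → ℝ) : ℝ := (⨆ i, v i) - ⨅ i, v i

section Spread

variable {ι : Type*} [Fintype ι]

lemma abs_sub_le_spread (v : ι → ℝ) (i j : ι) : |v i - v j| ≤ spread v := by
  have hi := le_ciSup (Finite.bddAbove_range v) i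
  have hj := le_ciSup (Finite.bddAbove_range v) j
  have hi' := ciInf_le (Finite.bddBelow_range v) i
  have hj' := ciInf_le (Finite.bddBelow_range v) j
  rw [spread, abs_sub_le_iff]
  constructor <;> linarith

lemma spread_nonneg [Nonempty ι] (v : ι → ℝ) : 0 ≤ spread v :=
  (abs_nonneg _).trans (abs_sub_le_spread v (Classical.arbitrary ι) (Classical.arbitrary ι))

lemma spread_le_iSup_abs_sub [Nonempty ι] (v : ι → ℝ) :
    spread v ≤ ⨆ p : ι × ι, |v p.1 - v p.2| := by
  obtain ⟨i, hi⟩ := exists_eq_ciSup_of_finite (f := v)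
  obtain ⟨j, hj⟩ := exists_eq_ciInf_of_finite (f := v)
  calc spread v = v i - v j := by rw [spread, hi, hj]
    _ ≤ |v (i, j).1 - v (i, j).2| := le_abs_self _
    _ ≤ _ := le_ciSup (Finite.bddAbove_range fun p : ι × ι => |v p.1 - v p.2|) (i, j)

end Spread

lemma Matrix.mulVec_const_eq_zero {ι : Type*} [Fintype ι] {M : Matrix ι ι ℝ}
    (hM : ∀ i, ∑ j, M i j = 0) (c : ℝ) : M *ᵥ Function.const ι c = 0 := by
  ext i
  simp [mulVec, dotProduct, ← sum_mul, hM]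

lemma hasDerivAt_const_sub_mulVec {ι : Type*} [Fintype ι] {M : Matrix ι ι ℝ}
    {x : ℝ → ι → ℝ} {t : ℝ} (hM : ∀ i, ∑ j, M i j = 0) (hx : HasDerivAt x (M *ᵥ x t) t) (c : ℝ) :
    HasDerivAt (fun s => Function.const ι c - x s) (M *ᵥ (Function.const ι c - x t)) t := by
  simpa [mulVec_sub, mulVec_const_eq_zero hM] using hx.const_sub (Function.const ι c)

lemma hasDerivAt_sub_const_mulVec {ι : Type*} [Fintype ι] {M : Matrix ι ι ℝ}
    {x : ℝ → ι → ℝ} {t : ℝ} (hM : ∀ i, ∑ j, M i j = 0) (hx : HasDerivAt x (M *ᵥ x t) t) (c : ℝ) :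
    HasDerivAt (fun s => x s - Function.const ι c) (M *ᵥ (x t - Function.const ι c)) t := by
  simpa [mulVec_sub, mulVec_const_eq_zero hM] using hx.sub_const (Function.const ι c)

section Consensus

variable {ι : Type*} [Fintype ι] {B : ℝ → Matrix ι ι ℝ} {x : ℝ → ι → ℝ} {a C : ℝ}

lemma apply_le_of_forall_apply_le (hB : ∀ t, a ≤ t → (B t).IsMetzler)
    (hBC : ∀ t, a ≤ t → ∀ i j, B t i j ≤ C) (hrow : ∀ t, a ≤ t → ∀ i, ∑ j, B t i j = 0)
    (hx : ∀ t, a ≤ t → HasDerivAt x (B t *ᵥ x t) t) {c : ℝ} (hc : ∀ i, x a i ≤ c)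
    {t : ℝ} (ht : a ≤ t) (i : ι) : x t i ≤ c := by
  simpa using nonneg_of_hasDerivAt_mulVec hB hBC
    (fun s hs => hasDerivAt_const_sub_mulVec (hrow s hs) (hx s hs) c)
    (fun j => by simpa using hc j) ht i

lemma le_apply_of_forall_le_apply (hB : ∀ t, a ≤ t → (B t).IsMetzler)
    (hBC : ∀ t, a ≤ t → ∀ i j, B t i j ≤ C) (hrow : ∀ t, a ≤ t → ∀ i, ∑ j, B t i j = 0)
    (hx : ∀ t, a ≤ t → HasDerivAt x (B t *ᵥ x t) t) {c : ℝ} (hc : ∀ i, c ≤ x a i)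
    {t : ℝ} (ht : a ≤ t) (i : ι) : c ≤ x t i := by
  simpa using nonneg_of_hasDerivAt_mulVec hB hBC
    (fun s hs => hasDerivAt_sub_const_mulVec (hrow s hs) (hx s hs) c)
    (fun j => by simpa using hc j) ht i

lemma spread_antitoneOn [Nonempty ι] (hB : ∀ t, a ≤ t → (B t).IsMetzler)
    (hBC : ∀ t, a ≤ t → ∀ i j, B t i j ≤ C) (hrow : ∀ t, a ≤ t → ∀ i, ∑ j, B t i j = 0)
    (hx : ∀ t, a ≤ t → HasDerivAt x (B t *ᵥ x t) t) :
    AntitoneOn (fun t => spread (x t)) (Ici a) := by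
  intro s (hs : a ≤ s) t _ hst
  have hB' := fun u (hu : s ≤ u) => hB u (hs.trans hu)
  have hBC' := fun u (hu : s ≤ u) => hBC u (hs.trans hu)
  have hrow' := fun u (hu : s ≤ u) => hrow u (hs.trans hu)
  have hx' := fun u (hu : s ≤ u) => hx u (hs.trans hu)
  exact sub_le_sub
    (ciSup_le (apply_le_of_forall_apply_le hB' hBC' hrow' hx'
      (le_ciSup (Finite.bddAbove_range _)) hst))
    (le_ciInf (le_apply_of_forall_le_apply hB' hBC' hrow' hx'
      (ciInf_le (Finite.bddBelow_range _)) hst))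

theorem spread_le_of_window [DecidableEq ι] [Nonempty ι] {b S δ : ℝ}
    (hB : ∀ t, a ≤ t → (B t).IsMetzler) (hBC : ∀ t, a ≤ t → ∀ i j, |B t i j| ≤ C)
    (hrow : ∀ t, a ≤ t → ∀ i, ∑ j, B t i j = 0) (hx : ∀ t, a ≤ t → HasDerivAt x (B t *ᵥ x t) t)
    (hab : a ≤ b) (hbS : b - a ≤ S) (hδ : 0 ≤ δ) (l : ι)
    (hint : ∀ i, i ≠ l → IntervalIntegrable (fun s => B s i l) MeasureTheory.volume a b)
    (hconn : ∀ i, i ≠ l → δ ≤ ∫ s in a..b, B s i l) :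
    spread (x b) ≤ (1 - min δ 1 * exp (-(C * S))) * spread (x a) := by
  set η := min δ 1 * exp (-(C * S))
  set M := ⨆ i, x a i
  set m := ⨅ i, x a i
  have hup : ∀ i, η * (M - x a l) ≤ M - x b i := by
    simpa using mul_apply_le_of_window hB hBC
      (fun s hs => hasDerivAt_const_sub_mulVec (hrow s hs) (hx s hs) M)
      (fun j => by simpa using le_ciSup (Finite.bddAbove_range _) j) hab hbS hδ l hint hconn
  have hlow : ∀ i, η * (x a l - m) ≤ x b i - m := by
    simpa using mul_apply_le_of_window hB hBC
      (fun s hs => hasDerivAt_sub_const_mulVec (hrow s hs) (hx s hs) m)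
      (fun j => by simpa using ciInf_le (Finite.bddBelow_range _) j) hab hbS hδ l hint hconn
  have hsup : ⨆ i, x b i ≤ M - η * (M - x a l) := ciSup_le fun i => by linarith [hup i]
  have hinf : m + η * (x a l - m) ≤ ⨅ i, x b i := le_ciInf fun i => by linarith [hlow i]
  rw [spread, spread]
  linarith

end Consensus

lemma le_exp_mul_of_contraction {D : ℝ → ℝ} {u : ℕ → ℝ} {S r t : ℝ} (hS : 0 < S) (hr : 0 ≤ r)
    (hD : AntitoneOn D (Ici 0)) (hD0 : 0 ≤ D 0) (hu : ∀ k, 0 ≤ u k)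
    (hgap : ∀ k, u (k + 1) - u k ≤ S) (hcontr : ∀ k, D (u (k + 1)) ≤ exp (-r) * D (u k))
    (ht : 0 ≤ t) : D t ≤ exp (r / S * (u 0 + S)) * exp (-(r / S) * t) * D 0 := by
  have hiter : ∀ k : ℕ, D (u k) ≤ exp (-(r * k)) * D (u 0) := by
    intro k
    induction k with
    | zero => simp
    | succ k ih =>
      calc D (u (k + 1)) ≤ exp (-r) * (exp (-(r * k)) * D (u 0)) :=
            (hcontr k).trans (by gcongr)
        _ = exp (-(r * ↑(k + 1))) * D (u 0) := by
            rw [← mul_assoc, ← exp_add]; push_cast; ring_nf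
  have hdrift : ∀ k : ℕ, u k ≤ u 0 + k * S := by
    intro k
    induction k with
    | zero => simp
    | succ k ih => push_cast; linarith [hgap k]
  set k := ⌊(t - u 0) / S⌋₊
  have hDt : D t ≤ exp (-(r * k)) * D 0 := by
    rcases lt_or_ge t (u 0) with h | h
    · have hk : k = 0 := Nat.floor_eq_zero.mpr
        ((div_neg_of_neg_of_pos (by linarith) hS).trans zero_lt_one)
      simpa [hk] using hD self_mem_Ici ht ht
    · have hkS : k * S ≤ t - u 0 :=
        (le_div_iff₀ hS).mp (Nat.floor_le (div_nonneg (sub_nonneg.mpr h) hS.le))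
      calc D t ≤ D (u k) := hD (hu k) ht (by linarith [hdrift k])
        _ ≤ exp (-(r * k)) * D (u 0) := hiter k
        _ ≤ exp (-(r * k)) * D 0 := by gcongr; exact hD self_mem_Ici (hu 0) (hu 0)
  have hk : (t - u 0) / S < k + 1 := Nat.lt_floor_add_one _
  calc D t ≤ exp (-(r * k)) * D 0 := hDt
    _ ≤ exp (r / S * (u 0 + S)) * exp (-(r / S) * t) * D 0 := by
      rw [← exp_add]
      gcongr
      have : r / S * (u 0 + S) + -(r / S) * t = r * (1 - (t - u 0) / S) := by field_simp; ring
      rw [this]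
      nlinarith

theorem stmt15_general {n : ℕ} (hn : 1 ≤ n) (A : ℝ → (Fin n → ℝ) → Matrix (Fin n) (Fin n) ℝ)
    (hcont : ContinuousOn (fun p : ℝ × (Fin n → ℝ) => A p.1 p.2) (Set.Ici 0 ×ˢ Set.univ))
    (hbdd : ∃ M : ℝ, ∀ t, 0 ≤ t → ∀ y i j, |A t y i j| ≤ M)
    (hmetzler : ∀ t, 0 ≤ t → ∀ y, ∀ i j, i ≠ j → 0 ≤ A t y i j)
    (hrow : ∀ t, 0 ≤ t → ∀ y i, ∑ j, A t y i j = 0)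
    (x : ℝ → Fin n → ℝ)
    (hx : ∀ t, 0 ≤ t → HasDerivAt x ((A t (x t)).mulVec (x t)) t)
    (tk : ℕ → ℝ) (htk0 : ∀ k, 0 ≤ tk k) (htkmono : StrictMono tk)
    (hgap : ∃ S : ℝ, ∀ k, tk (k + 1) - tk k ≤ S)
    (l : Fin n) (δ : ℝ) (hδ : 0 < δ)
    (hconn : ∀ k : ℕ, 1 ≤ k → ∀ i, i ≠ l →
      δ ≤ ∫ s in tk k..tk (k + 1), A s (x s) i l) :
    ∃ k₀ lam : ℝ, 0 < k₀ ∧ 0 < lam ∧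
      ∀ t, 0 ≤ t → ∀ i j,
        |x t i - x t j| ≤
          k₀ * Real.exp (-lam * t) * ⨆ p : Fin n × Fin n, |x 0 p.1 - x 0 p.2| := by
  have : Nonempty (Fin n) := ⟨⟨0, hn⟩⟩
  obtain ⟨C, hC⟩ := hbdd
  obtain ⟨S, hS⟩ := hgap
  have hSpos : 0 < S := (sub_pos.mpr (htkmono zero_lt_one)).trans_le (hS 0)
  set η := min δ 1 * exp (-(C * S))
  have hη : 0 < η := by positivity
  have hBcont : ContinuousOn (fun t => A t (x t)) (Ici 0) :=
    hcont.comp (continuousOn_id.prodMk fun t ht => (hx t ht).continuousAt.continuousWithinAt)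
      fun t ht => ⟨ht, trivial⟩
  have hcontr (k : ℕ) : spread (x (tk (k + 2))) ≤ exp (-η) * spread (x (tk (k + 1))) := by
    have h0 : 0 ≤ tk (k + 1) := htk0 _
    have hint (i : Fin n) (_ : i ≠ l) : IntervalIntegrable (fun s => A s (x s) i l)
        MeasureTheory.volume (tk (k + 1)) (tk (k + 2)) :=
      ContinuousOn.intervalIntegrable <|
        ((continuous_apply_apply i l).comp_continuousOn hBcont).mono
          fun s hs => (le_inf h0 (htk0 _)).trans hs.1
    calc spread (x (tk (k + 2))) ≤ (1 - η) * spread (x (tk (k + 1))) :=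
          spread_le_of_window (B := fun t => A t (x t)) (fun t ht => hmetzler t (h0.trans ht) _)
            (fun t ht => hC t (h0.trans ht) _) (fun t ht => hrow t (h0.trans ht) _)
            (fun t ht => hx t (h0.trans ht)) (htkmono (by omega)).le (hS (k + 1)) hδ.le l hint
            (hconn (k + 1) (by omega))
      _ ≤ exp (-η) * spread (x (tk (k + 1))) := by
          gcongr
          · exact spread_nonneg _
          · exact one_sub_le_exp_neg η
  refine ⟨exp (η / S * (tk 1 + S)), η / S, exp_pos _, div_pos hη hSpos, fun t ht i j => ?_⟩
  calc |x t i - x t j| ≤ spread (x t) := abs_sub_le_spread _ i j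
    _ ≤ exp (η / S * (tk 1 + S)) * exp (-(η / S) * t) * spread (x 0) :=
        le_exp_mul_of_contraction (u := fun k => tk (k + 1)) hSpos hη.le
          (spread_antitoneOn (B := fun t => A t (x t)) (fun t ht => hmetzler t ht _)
            (fun t ht i j => (abs_le.mp (hC t ht _ i j)).2) (fun t ht => hrow t ht _) hx)
          (spread_nonneg _) (fun _ => htk0 _) (fun k => hS (k + 1)) hcontr ht
    _ ≤ _ := by gcongr; exact spread_le_iSup_abs_sub _

/-- trajectory form of the paper's main theorem: a trajectory of the
nonlinear consensus system `x' = A(t, x(t))·x(t)` (with `A(t,y)` Metzler, zero row sums,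
continuous and uniformly bounded) satisfying the accumulated-graph connectivity
condition along a sequence of times achieves exponential consensus. -/
theorem stmt15 {n : ℕ} (hn : 1 ≤ n) (A : ℝ → (Fin n → ℝ) → Matrix (Fin n) (Fin n) ℝ)
    (hcont : ContinuousOn (fun p : ℝ × (Fin n → ℝ) => A p.1 p.2) (Set.Ici 0 ×ˢ Set.univ))
    (hbdd : ∃ M : ℝ, ∀ t, 0 ≤ t → ∀ y i j, |A t y i j| ≤ M)
    (hmetzler : ∀ t, 0 ≤ t → ∀ y, ∀ i j, i ≠ j → 0 ≤ A t y i j)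
    (hrow : ∀ t, 0 ≤ t → ∀ y i, ∑ j, A t y i j = 0)
    (x : ℝ → Fin n → ℝ)
    (hx : ∀ t, 0 ≤ t → HasDerivAt x ((A t (x t)).mulVec (x t)) t)
    (tk : ℕ → ℝ) (htk0 : ∀ k, 0 ≤ tk k) (htkmono : StrictMono tk)
    (htktop : Filter.Tendsto tk Filter.atTop Filter.atTop)
    (hgap : ∃ S : ℝ, ∀ k, tk (k + 1) - tk k ≤ S)
    (l : Fin n) (δ : ℝ) (hδ : 0 < δ)
    (hconn : ∀ k : ℕ, 1 ≤ k → ∀ i, i ≠ l →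
      δ ≤ ∫ s in tk k..tk (k + 1), A s (x s) i l) :
    ∃ k₀ lam : ℝ, 0 < k₀ ∧ 0 < lam ∧
      ∀ t, 0 ≤ t → ∀ i j,
        |x t i - x t j| ≤
          k₀ * Real.exp (-lam * t) * ⨆ p : Fin n × Fin n, |x 0 p.1 - x 0 p.2| :=
  stmt15_general hn A hcont hbdd hmetzler hrow x hx tk htk0 htkmono hgap l δ hδ hconn
end
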